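/- For every sequential regex formula α there exists a disjunctive functional regex formula β such that ⟦α⟧(d) = ⟦β⟧(d) for every document d. -/

import Mathlib

namespace Spanners

open scoped Classical

/-! ### Spans and mappings -/

abbrev Span := ℕ × ℕ

abbrev VMapping := ℕ → Option Span

def emptyMapping : VMapping := fun _ => none

def mapDom (μ : VMapping) : Set ℕ := {x | μ x ≠ none}

/-- Two mappings are compatible if they agree on every common variable. -/
def Compatible (μ1 μ2 : VMapping) : Prop :=
  ∀ x s1 s2, μ1 x = some s1 → μ2 x = some s2 → s1 = s2

def DisjointDom (μ1 μ2 : VMapping) : Prop :=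
  ∀ x, μ1 x = none ∨ μ2 x = none

def munion (μ1 μ2 : VMapping) : VMapping := fun x =>
  match μ1 x with
  | some s => some s
  | none => μ2 x

def minsert (x : ℕ) (s : Span) (μ : VMapping) : VMapping :=
  fun y => if y = x then some s else μ y

/-- Natural join of two sets of mappings. -/
def joinSet (S1 S2 : Set VMapping) : Set VMapping :=
  {μ | ∃ μ1 ∈ S1, ∃ μ2 ∈ S2, Compatible μ1 μ2 ∧ μ = munion μ1 μ2}

/-- Difference of two sets of mappings. -/
def diffSet (S1 S2 : Set VMapping) : Set VMapping :=
  {μ1 | μ1 ∈ S1 ∧ ∀ μ2 ∈ S2, ¬ Compatible μ1 μ2}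

/-- Restriction of a mapping to a set of variables. -/
noncomputable def restrictMap (μ : VMapping) (V : Set ℕ) : VMapping :=
  fun x => if x ∈ V then μ x else none

/-- Projection of a set of mappings to a set of variables. -/
def projSet (V : Set ℕ) (S : Set VMapping) : Set VMapping :=
  {μ' | ∃ μ ∈ S, μ' = restrictMap μ V}

/-! ### Regex formulas -/

inductive RGX (Sig : Type) where
  | empty : RGX Sig
  | eps : RGX Sig
  | letter : Sig → RGX Sig
  | union : RGX Sig → RGX Sig → RGX Sig
  | concat : RGX Sig → RGX Sig → RGX Sig
  | star : RGX Sig → RGX Sig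
  | bind : ℕ → RGX Sig → RGX Sig

variable {Sig : Type}

def RGX.vars : RGX Sig → Finset ℕ
  | .empty => ∅
  | .eps => ∅
  | .letter _ => ∅
  | .union a b => a.vars ∪ b.vars
  | .concat a b => a.vars ∪ b.vars
  | .star a => a.vars
  | .bind x a => insert x a.vars

def RGX.size : RGX Sig → ℕ
  | .empty => 1
  | .eps => 1
  | .letter _ => 1
  | .union a b => a.size + b.size + 1
  | .concat a b => a.size + b.size + 1
  | .star a => a.size + 1
  | .bind _ a => a.size + 1

/-- The schemaless semantics `⟨α⟩(d)`: `RMatch α d i j μ` means `([i,j⟩, μ) ∈ ⟨α⟩(d)`. -/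
inductive RMatch : RGX Sig → List Sig → ℕ → ℕ → VMapping → Prop where
  | eps {d : List Sig} {i : ℕ} (h1 : 1 ≤ i) (h2 : i ≤ d.length + 1) :
      RMatch .eps d i i emptyMapping
  | letter {d : List Sig} {i : ℕ} {σ : Sig} (h1 : 1 ≤ i) (h2 : d[i - 1]? = some σ) :
      RMatch (.letter σ) d i (i + 1) emptyMapping
  | unionL {a b : RGX Sig} {d : List Sig} {i j : ℕ} {μ : VMapping}
      (h : RMatch a d i j μ) : RMatch (.union a b) d i j μ
  | unionR {a b : RGX Sig} {d : List Sig} {i j : ℕ} {μ : VMapping}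
      (h : RMatch b d i j μ) : RMatch (.union a b) d i j μ
  | concat {a b : RGX Sig} {d : List Sig} {i k j : ℕ} {μ1 μ2 : VMapping}
      (h1 : RMatch a d i k μ1) (h2 : RMatch b d k j μ2) (hd : DisjointDom μ1 μ2) :
      RMatch (.concat a b) d i j (munion μ1 μ2)
  | bind {x : ℕ} {a : RGX Sig} {d : List Sig} {i j : ℕ} {μ : VMapping}
      (h : RMatch a d i j μ) (hx : μ x = none) :
      RMatch (.bind x a) d i j (minsert x (i, j) μ)
  | starNil {a : RGX Sig} {d : List Sig} {i : ℕ} (h1 : 1 ≤ i) (h2 : i ≤ d.length + 1) :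
      RMatch (.star a) d i i emptyMapping
  | starCons {a : RGX Sig} {d : List Sig} {i k j : ℕ} {μ1 μ2 : VMapping}
      (h1 : RMatch a d i k μ1) (h2 : RMatch (.star a) d k j μ2) (hd : DisjointDom μ1 μ2) :
      RMatch (.star a) d i j (munion μ1 μ2)

/-- `⟦α⟧(d)`: mappings extracted with the full span. -/
def rgxSem (α : RGX Sig) (d : List Sig) : Set VMapping :=
  {μ | RMatch α d 1 (d.length + 1) μ}

/-- Sequential regex formulas. -/
def RGX.Sequential : RGX Sig → Prop
  | .empty => True
  | .eps => True
  | .letter _ => True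
  | .union a b => a.Sequential ∧ b.Sequential
  | .concat a b => a.Sequential ∧ b.Sequential ∧ Disjoint a.vars b.vars
  | .star a => a.Sequential ∧ a.vars = ∅
  | .bind x a => a.Sequential ∧ x ∉ a.vars

/-- Variable-free words over the alphabet (built from ε, letters and concatenation). -/
inductive RGX.IsWord : RGX Sig → Prop where
  | eps : RGX.IsWord .eps
  | letter (σ : Sig) : RGX.IsWord (.letter σ)
  | concat {a b : RGX Sig} : a.IsWord → b.IsWord → RGX.IsWord (.concat a b)

/-- Functional for a set `V` of variables. -/
inductive FunctionalFor : RGX Sig → Finset ℕ → Prop where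
  | word {α : RGX Sig} (h : α.IsWord) : FunctionalFor α ∅
  | union {a b : RGX Sig} {V : Finset ℕ} (ha : FunctionalFor a V) (hb : FunctionalFor b V) :
      FunctionalFor (.union a b) V
  | concat {a b : RGX Sig} {V : Finset ℕ} (V1 : Finset ℕ) (hsub : V1 ⊆ V)
      (ha : FunctionalFor a V1) (hb : FunctionalFor b (V \ V1)) :
      FunctionalFor (.concat a b) V
  | star {a : RGX Sig} (h : FunctionalFor a ∅) : FunctionalFor (.star a) ∅
  | bind {x : ℕ} {a : RGX Sig} {V : Finset ℕ} (h : FunctionalFor a (V.erase x)) :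
      FunctionalFor (.bind x a) V

def RGX.Functional (α : RGX Sig) : Prop := FunctionalFor α α.vars

/-- Disjunctive functional regex formulas: finite disjunctions of functional regex formulas. -/
inductive DisjFunctional : RGX Sig → Prop where
  | base {γ : RGX Sig} (h : γ.Functional) : DisjFunctional γ
  | union {a b : RGX Sig} (ha : DisjFunctional a) (hb : DisjFunctional b) :
      DisjFunctional (.union a b)

/-- Number of disjuncts of a (disjunctive) regex formula. -/
def countDisjuncts : RGX Sig → ℕ
  | .union a b => countDisjuncts a + countDisjuncts b
  | _ => 1

/-- Disjunction-free regex formulas. -/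
def RGX.DisjFree : RGX Sig → Prop
  | .union _ _ => False
  | .concat a b => a.DisjFree ∧ b.DisjFree
  | .star a => a.DisjFree
  | .bind _ a => a.DisjFree
  | _ => True

/-- `γ` is synchronized for `x`: no subformula `γ1 ∨ γ2` contains `x`. -/
def RGX.SyncFor : RGX Sig → ℕ → Prop
  | .union a b, x => (x ∉ a.vars ∧ x ∉ b.vars) ∧ a.SyncFor x ∧ b.SyncFor x
  | .concat a b, x => a.SyncFor x ∧ b.SyncFor x
  | .star a, x => a.SyncFor x
  | .bind _ a, x => a.SyncFor x
  | _, _ => True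

/-- Concatenation of a list of regex formulas. -/
def concatList : List (RGX Sig) → RGX Sig
  | [] => .eps
  | [α] => α
  | α :: rest => .concat α (concatList rest)

/-- Disjunction of a list of regex formulas. -/
def disjList : List (RGX Sig) → RGX Sig
  | [] => .empty
  | [α] => α
  | α :: rest => .union α (disjList rest)

/-! ### vset-automata -/

inductive VLabel (Sig : Type) where
  | eps : VLabel Sig
  | letter : Sig → VLabel Sig
  | openv : ℕ → VLabel Sig
  | closev : ℕ → VLabel Sig
deriving DecidableEq

structure VA (Sig : Type) [DecidableEq Sig] where
  q0 : ℕ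
  F : Finset ℕ
  δ : Finset (ℕ × VLabel Sig × ℕ)

variable [DecidableEq Sig]

/-- The states of a VA: the initial state and all states mentioned in `F` or in transitions. -/
def statesOf (A : VA Sig) : Finset ℕ :=
  insert A.q0 (A.F ∪ A.δ.image (fun t => t.1) ∪ A.δ.image (fun t => t.2.2))

def labelVars : VLabel Sig → Finset ℕ
  | .openv x => {x}
  | .closev x => {x}
  | _ => ∅

/-- `Vars(A)`: the variables mentioned in the transitions of `A`. -/
def varsOf (A : VA Sig) : Finset ℕ := A.δ.biUnion (fun t => labelVars t.2.1)

/-- Total size of a VA: number of states plus number of transitions. -/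
def vaSize (A : VA Sig) : ℕ := (statesOf A).card + A.δ.card

/-- `A.PathFrom p ls q`: a path (run segment) from `p` to `q` with label sequence `ls`. -/
inductive VA.PathFrom (A : VA Sig) : ℕ → List (VLabel Sig) → ℕ → Prop where
  | nil (q : ℕ) : VA.PathFrom A q [] q
  | cons {p q r : ℕ} {l : VLabel Sig} {ls : List (VLabel Sig)}
      (h : (p, l, q) ∈ A.δ) (htail : VA.PathFrom A q ls r) : VA.PathFrom A p (l :: ls) r

/-- The word (document) read by a sequence of labels. -/
def readWord : List (VLabel Sig) → List Sig :=
  List.filterMap fun l => match l with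
    | VLabel.letter σ => some σ
    | _ => none

def isLetterL : VLabel Sig → Bool
  | .letter _ => true
  | _ => false

/-- The current position in the document just before executing the `k`-th label. -/
def posAt (ls : List (VLabel Sig)) (k : ℕ) : ℕ := 1 + (ls.take k).countP isLetterL

/-- Validity of a run, given by its label sequence. -/
def ValidLabels (ls : List (VLabel Sig)) : Prop :=
  ∀ x : ℕ,
    ls.count (VLabel.openv x) ≤ 1 ∧
    ls.count (VLabel.closev x) ≤ 1 ∧
    ((VLabel.openv x) ∈ ls ↔ (VLabel.closev x) ∈ ls) ∧
    ∀ i j : ℕ, ls[i]? = some (VLabel.openv x) → ls[j]? = some (VLabel.closev x) →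
      posAt ls i ≤ posAt ls j

/-- The mapping `μ_ρ` extracted from a (valid accepting) run with label sequence `ls`. -/
def runMapping (ls : List (VLabel Sig)) : VMapping := fun x =>
  if (VLabel.openv x) ∈ ls then
    some (posAt ls (ls.idxOf (VLabel.openv x)), posAt ls (ls.idxOf (VLabel.closev x)))
  else none

/-- `ls` is the label sequence of an accepting run of `A`. -/
def AcceptsWith (A : VA Sig) (ls : List (VLabel Sig)) : Prop :=
  ∃ qf, VA.PathFrom A A.q0 ls qf ∧ qf ∈ A.F

/-- `⟦A⟧(d)`. -/
def vaSem (A : VA Sig) (d : List Sig) : Set VMapping :=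
  {μ | ∃ ls, AcceptsWith A ls ∧ readWord ls = d ∧ ValidLabels ls ∧ μ = runMapping ls}

/-- A VA is sequential if all of its accepting runs are valid. -/
def VA.Sequential (A : VA Sig) : Prop := ∀ ls, AcceptsWith A ls → ValidLabels ls

/-- A run from the initial state to `q` that is a prefix of an accepting run. -/
def PrefixRun (A : VA Sig) (ls : List (VLabel Sig)) (q : ℕ) : Prop :=
  VA.PathFrom A A.q0 ls q ∧ ∃ ls' qf, VA.PathFrom A q ls' qf ∧ qf ∈ A.F

/-- `A` is semi-functional for the variable `x`: no state has extended configuration `d`. -/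
def SemiFunctionalFor (A : VA Sig) (x : ℕ) : Prop :=
  ¬ ∃ q ls1 ls2, PrefixRun A ls1 q ∧ PrefixRun A ls2 q ∧
      (VLabel.closev x) ∈ ls1 ∧ (VLabel.openv x) ∉ ls2

def SemiFunctionalForSet (A : VA Sig) (X : Finset ℕ) : Prop :=
  ∀ x ∈ X, SemiFunctionalFor A x

/-- Functional VA: sequential, and every accepting run opens and closes every variable. -/
def FunctionalVA (A : VA Sig) : Prop :=
  A.Sequential ∧ ∀ ls, AcceptsWith A ls → ∀ x ∈ varsOf A,
    (VLabel.openv x) ∈ ls ∧ (VLabel.closev x) ∈ ls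

/-- `l` has a unique target state in `A`. -/
def UniqueTarget (A : VA Sig) (l : VLabel Sig) : Prop :=
  ∃ qt : ℕ, ∀ p q : ℕ, (p, l, q) ∈ A.δ → q = qt

/-- `A` is synchronized for the variable `x`. -/
def SyncForVA (A : VA Sig) (x : ℕ) : Prop :=
  UniqueTarget A (VLabel.openv x) ∧ UniqueTarget A (VLabel.closev x) ∧
    ((∀ ls, AcceptsWith A ls → (VLabel.openv x) ∈ ls ∧ (VLabel.closev x) ∈ ls) ∨
     (∀ ls, AcceptsWith A ls → (VLabel.openv x) ∉ ls ∧ (VLabel.closev x) ∉ ls))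

/-- `A` is the disjunctive functional VA with functional components `parts`. -/
def DisjFunctionalVAWith (A : VA Sig) (parts : List (VA Sig)) : Prop :=
  (∀ B ∈ parts, FunctionalVA B) ∧
  (parts.Pairwise fun B C => Disjoint (statesOf B) (statesOf C)) ∧
  (∀ B ∈ parts, A.q0 ∉ statesOf B) ∧
  A.F = parts.foldr (fun B s => B.F ∪ s) (∅ : Finset ℕ) ∧
  A.δ = (parts.map (fun B => (A.q0, (VLabel.eps : VLabel Sig), B.q0))).toFinset
        ∪ parts.foldr (fun B s => B.δ ∪ s) (∅ : Finset (ℕ × VLabel Sig × ℕ))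

def DisjFunctionalVA (A : VA Sig) : Prop := ∃ parts, DisjFunctionalVAWith A parts

/-! ### 3CNF formulas -/

/-- A 3CNF clause over `n` Boolean variables: a triple of literals; `(i, true)` is `xᵢ`,
`(i, false)` is `¬xᵢ`. -/
def Clause3 (n : ℕ) : Type := (Fin n × Bool) × (Fin n × Bool) × (Fin n × Bool)

def litsOf {n : ℕ} (c : Clause3 n) : List (Fin n × Bool) := [c.1, c.2.1, c.2.2]

def clauseSat {n : ℕ} (τ : Fin n → Bool) (c : Clause3 n) : Prop :=
  ∃ l ∈ litsOf c, τ l.1 = l.2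

def Sat3 {n m : ℕ} (φ : Fin m → Clause3 n) : Prop :=
  ∃ τ : Fin n → Bool, ∀ j, clauseSat τ (φ j)

end Spanners

namespace Spanners

variable {Sig : Type}

/-!
By induction on `α`, a sequential formula is matched exactly as the disjunction of a list of
functional formulas using only its variables. Unions append the lists; concatenation and
binding distribute over the components, sequentiality keeping the two sides disjoint in
variables and the bound variable fresh. The body of a star is variable-free, so its components
are functional for `∅`, and then so is their disjunction, which can stay under the star.
Finally, a functional formula without matches is added to the list, since the empty
disjunction `∅` is not functional.
-/

section Semantics

variable {a b : RGX Sig} {d : List Sig} {i j : ℕ} {μ : VMapping}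

lemma not_rmatch_empty : ¬ RMatch (.empty : RGX Sig) d i j μ := nofun

lemma rmatch_union_iff :
    RMatch (.union a b) d i j μ ↔ RMatch a d i j μ ∨ RMatch b d i j μ :=
  ⟨fun | .unionL h => .inl h | .unionR h => .inr h,
   fun | .inl h => .unionL h | .inr h => .unionR h⟩

lemma rmatch_concat_iff :
    RMatch (.concat a b) d i j μ ↔
      ∃ k μ1 μ2, RMatch a d i k μ1 ∧ RMatch b d k j μ2 ∧ DisjointDom μ1 μ2 ∧
        μ = munion μ1 μ2 :=
  ⟨fun | .concat h1 h2 hd => ⟨_, _, _, h1, h2, hd, rfl⟩,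
   fun ⟨_, _, _, h1, h2, hd, hμ⟩ => hμ ▸ .concat h1 h2 hd⟩

lemma rmatch_bind_iff {x : ℕ} :
    RMatch (.bind x a) d i j μ ↔
      ∃ μ', RMatch a d i j μ' ∧ μ' x = none ∧ μ = minsert x (i, j) μ' :=
  ⟨fun | .bind h hx => ⟨_, h, hx, rfl⟩, fun ⟨_, h, hx, hμ⟩ => hμ ▸ .bind h hx⟩

lemma rmatch_disjList {L : List (RGX Sig)} :
    RMatch (disjList L) d i j μ ↔ ∃ γ ∈ L, RMatch γ d i j μ := by
  induction L with
  | nil => simpa [disjList] using not_rmatch_empty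
  | cons γ rest ih =>
    cases rest with
    | nil => simp [disjList]
    | cons γ' rest' =>
      rw [List.exists_mem_cons_iff, ← ih, ← rmatch_union_iff]
      rfl

lemma RMatch.star_mono {a' : RGX Sig}
    (hmono : ∀ d i j μ, RMatch a d i j μ → RMatch a' d i j μ)
    (h : RMatch (.star a) d i j μ) : RMatch (.star a') d i j μ := by
  generalize hE : RGX.star a = E at h
  induction h with
  | starNil h1 h2 => exact .starNil h1 h2
  | starCons h1 _ hd _ ih => cases hE; exact .starCons (hmono _ _ _ _ h1) (ih rfl) hd
  | _ => cases hE

lemma rmatch_star_congr {a' : RGX Sig}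
    (hiff : ∀ d i j μ, RMatch a d i j μ ↔ RMatch a' d i j μ) :
    RMatch (.star a) d i j μ ↔ RMatch (.star a') d i j μ :=
  ⟨.star_mono fun _ _ _ _ => (hiff _ _ _ _).mp, .star_mono fun _ _ _ _ => (hiff _ _ _ _).mpr⟩

lemma rmatch_star_empty_iff : RMatch (.star .empty) d i j μ ↔ RMatch (.eps : RGX Sig) d i j μ :=
  ⟨fun | .starNil h1 h2 => .eps h1 h2, fun | .eps h1 h2 => .starNil h1 h2⟩

end Semantics

lemma RGX.IsWord.vars_eq_empty {α : RGX Sig} (h : α.IsWord) : α.vars = ∅ := by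
  induction h with
  | eps | letter => rfl
  | concat _ _ iha ihb => simp [RGX.vars, iha, ihb]

lemma RGX.IsWord.functional {α : RGX Sig} (h : α.IsWord) : α.Functional := by
  rw [RGX.Functional, h.vars_eq_empty]
  exact .word h

lemma RGX.Functional.concat {a b : RGX Sig} (ha : a.Functional) (hb : b.Functional)
    (hab : Disjoint a.vars b.vars) : (RGX.concat a b).Functional := by
  refine FunctionalFor.concat (V := a.vars ∪ b.vars) a.vars Finset.subset_union_left ha ?_
  rwa [Finset.union_sdiff_cancel_left hab]

lemma RGX.Functional.bind {a : RGX Sig} {x : ℕ} (ha : a.Functional) (hx : x ∉ a.vars) :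
    (RGX.bind x a).Functional :=
  FunctionalFor.bind (V := insert x a.vars) (by rwa [Finset.erase_insert hx])

lemma functionalFor_disjList {L : List (RGX Sig)} {V : Finset ℕ} (hne : L ≠ [])
    (h : ∀ γ ∈ L, FunctionalFor γ V) : FunctionalFor (disjList L) V := by
  induction L with
  | nil => contradiction
  | cons γ rest ih =>
    cases rest with
    | nil => exact h γ (by simp)
    | cons γ' rest' =>
      exact .union (h γ (by simp)) (ih (by simp) fun g hg => h g (List.mem_cons_of_mem _ hg))

lemma disjFunctional_disjList {L : List (RGX Sig)} (hne : L ≠ [])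
    (h : ∀ γ ∈ L, γ.Functional) : DisjFunctional (disjList L) := by
  induction L with
  | nil => contradiction
  | cons γ rest ih =>
    cases rest with
    | nil => exact .base (h γ (by simp))
    | cons γ' rest' =>
      exact .union (.base (h γ (by simp)))
        (ih (by simp) fun g hg => h g (List.mem_cons_of_mem _ hg))

lemma vars_disjList_subset {L : List (RGX Sig)} {V : Finset ℕ} (h : ∀ γ ∈ L, γ.vars ⊆ V) :
    (disjList L).vars ⊆ V := by
  induction L with
  | nil => simp [disjList, RGX.vars]
  | cons γ rest ih =>
    cases rest with
    | nil => exact h γ (by simp)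
    | cons γ' rest' =>
      exact Finset.union_subset (h γ (by simp)) (ih fun g hg => h g (List.mem_cons_of_mem _ hg))

/-- Binds `0` twice, so it has no match. -/
def neverMatch : RGX Sig := .concat (.bind 0 .eps) (.bind 0 .eps)

lemma neverMatch_functional : (neverMatch : RGX Sig).Functional := by
  have hbind {V : Finset ℕ} (hV : V ⊆ {0}) : FunctionalFor (RGX.bind 0 (.eps : RGX Sig)) V :=
    .bind <| (Finset.erase_eq_empty_iff _ _).mpr (Finset.subset_singleton_iff.mp hV) ▸ .word .eps
  exact FunctionalFor.concat {0} (by simp [neverMatch, RGX.vars]) (hbind subset_rfl)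
    (hbind Finset.sdiff_subset)

lemma not_rmatch_neverMatch {d : List Sig} {i j : ℕ} {μ : VMapping} :
    ¬ RMatch (neverMatch : RGX Sig) d i j μ := by
  rw [neverMatch, rmatch_concat_iff]
  rintro ⟨_, _, _, h1, h2, hd, -⟩
  rw [rmatch_bind_iff] at h1 h2
  obtain ⟨_, -, -, rfl⟩ := h1
  obtain ⟨_, -, -, rfl⟩ := h2
  simpa [minsert] using hd 0

/-- `vars_subset` is what keeps the components of a sequential concatenation disjoint in
variables. -/
structure FunctionalDecomposition (α : RGX Sig) (L : List (RGX Sig)) : Prop where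
  functional : ∀ γ ∈ L, γ.Functional
  vars_subset : ∀ γ ∈ L, γ.vars ⊆ α.vars
  rmatch_iff : ∀ d i j μ, (∃ γ ∈ L, RMatch γ d i j μ) ↔ RMatch α d i j μ

namespace FunctionalDecomposition

lemma empty : FunctionalDecomposition (.empty : RGX Sig) [] :=
  ⟨by simp, by simp, fun _ _ _ _ => by simpa using not_rmatch_empty⟩

lemma word {α : RGX Sig} (h : α.IsWord) : FunctionalDecomposition α [α] :=
  ⟨by simpa using h.functional, by simp, fun _ _ _ _ => by simp⟩

variable {a b : RGX Sig} {La Lb : List (RGX Sig)}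

lemma union (ha : FunctionalDecomposition a La) (hb : FunctionalDecomposition b Lb) :
    FunctionalDecomposition (.union a b) (La ++ Lb) where
  functional γ hγ := (List.mem_append.mp hγ).elim (ha.functional γ) (hb.functional γ)
  vars_subset γ hγ := (List.mem_append.mp hγ).elim
    (fun h => (ha.vars_subset γ h).trans Finset.subset_union_left)
    (fun h => (hb.vars_subset γ h).trans Finset.subset_union_right)
  rmatch_iff d i j μ := by
    rw [rmatch_union_iff, ← ha.rmatch_iff, ← hb.rmatch_iff]
    simp only [List.mem_append, or_and_right, exists_or]

lemma concat (ha : FunctionalDecomposition a La) (hb : FunctionalDecomposition b Lb)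
    (hab : Disjoint a.vars b.vars) :
    FunctionalDecomposition (.concat a b) (La.flatMap fun γ => Lb.map (.concat γ)) where
  functional γ hγ := by
    simp only [List.mem_flatMap, List.mem_map] at hγ
    obtain ⟨γa, hγa, γb, hγb, rfl⟩ := hγ
    exact (ha.functional γa hγa).concat (hb.functional γb hγb)
      (hab.mono (ha.vars_subset γa hγa) (hb.vars_subset γb hγb))
  vars_subset γ hγ := by
    simp only [List.mem_flatMap, List.mem_map] at hγ
    obtain ⟨γa, hγa, γb, hγb, rfl⟩ := hγ
    exact Finset.union_subset_union (ha.vars_subset γa hγa) (hb.vars_subset γb hγb)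
  rmatch_iff d i j μ := by
    constructor
    · rintro ⟨_, hγ, hm⟩
      simp only [List.mem_flatMap, List.mem_map] at hγ
      obtain ⟨γa, hγa, γb, hγb, rfl⟩ := hγ
      obtain ⟨k, μa, μb, hma, hmb, hd, rfl⟩ := rmatch_concat_iff.mp hm
      exact .concat ((ha.rmatch_iff ..).mp ⟨γa, hγa, hma⟩)
        ((hb.rmatch_iff ..).mp ⟨γb, hγb, hmb⟩) hd
    · intro hm
      obtain ⟨k, μa, μb, hma, hmb, hd, rfl⟩ := rmatch_concat_iff.mp hm
      obtain ⟨γa, hγa, hma⟩ := (ha.rmatch_iff ..).mpr hma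
      obtain ⟨γb, hγb, hmb⟩ := (hb.rmatch_iff ..).mpr hmb
      exact ⟨_, List.mem_flatMap.mpr ⟨γa, hγa, List.mem_map_of_mem hγb⟩,
        .concat hma hmb hd⟩

lemma star (ha : FunctionalDecomposition a La) (hvars : a.vars = ∅) :
    ∃ L, FunctionalDecomposition (.star a) L := by
  have hiff d i j μ : RMatch (.star a) d i j μ ↔ RMatch (.star (disjList La)) d i j μ :=
    rmatch_star_congr fun d i j μ => by rw [rmatch_disjList, ha.rmatch_iff]
  rcases eq_or_ne La [] with rfl | hne
  · refine ⟨[.eps], (word .eps).functional, by simp [RGX.vars], fun d i j μ => ?_⟩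
    simp only [hiff, List.mem_singleton, exists_eq_left]
    exact rmatch_star_empty_iff.symm
  · have hγvars : ∀ γ ∈ La, γ.vars = ∅ := fun γ hγ =>
      Finset.subset_empty.mp (hvars ▸ ha.vars_subset γ hγ)
    have hLvars : (disjList La).vars = ∅ :=
      Finset.subset_empty.mp (vars_disjList_subset fun γ hγ => (hγvars γ hγ).le)
    refine ⟨[.star (disjList La)], ?_, by simp [RGX.vars, hLvars], fun d i j μ => ?_⟩
    · simp only [List.mem_singleton, forall_eq, RGX.Functional, RGX.vars, hLvars]
      refine FunctionalFor.star (functionalFor_disjList hne fun γ hγ => ?_)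
      simpa [RGX.Functional, hγvars γ hγ] using ha.functional γ hγ
    · simp only [hiff, List.mem_singleton, exists_eq_left]

lemma bind {x : ℕ} (ha : FunctionalDecomposition a La) (hx : x ∉ a.vars) :
    FunctionalDecomposition (.bind x a) (La.map (.bind x)) where
  functional γ hγ := by
    obtain ⟨γa, hγa, rfl⟩ := List.mem_map.mp hγ
    exact (ha.functional γa hγa).bind fun h => hx (ha.vars_subset γa hγa h)
  vars_subset γ hγ := by
    obtain ⟨γa, hγa, rfl⟩ := List.mem_map.mp hγ
    exact Finset.insert_subset_insert x (ha.vars_subset γa hγa)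
  rmatch_iff d i j μ := by
    constructor
    · rintro ⟨_, hγ, hm⟩
      obtain ⟨γa, hγa, rfl⟩ := List.mem_map.mp hγ
      obtain ⟨μa, hma, hμx, rfl⟩ := rmatch_bind_iff.mp hm
      exact .bind ((ha.rmatch_iff ..).mp ⟨γa, hγa, hma⟩) hμx
    · intro hm
      obtain ⟨μa, hma, hμx, rfl⟩ := rmatch_bind_iff.mp hm
      obtain ⟨γa, hγa, hma⟩ := (ha.rmatch_iff ..).mpr hma
      exact ⟨_, List.mem_map_of_mem hγa, .bind hma hμx⟩

end FunctionalDecomposition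

lemma RGX.Sequential.exists_functionalDecomposition {α : RGX Sig} (h : α.Sequential) :
    ∃ L, FunctionalDecomposition α L := by
  induction α with
  | empty => exact ⟨_, .empty⟩
  | eps => exact ⟨_, .word .eps⟩
  | letter σ => exact ⟨_, .word (.letter σ)⟩
  | union a b iha ihb =>
    obtain ⟨La, ha⟩ := iha h.1
    obtain ⟨Lb, hb⟩ := ihb h.2
    exact ⟨_, ha.union hb⟩
  | concat a b iha ihb =>
    obtain ⟨La, ha⟩ := iha h.1
    obtain ⟨Lb, hb⟩ := ihb h.2.1
    exact ⟨_, ha.concat hb h.2.2⟩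
  | star a iha =>
    obtain ⟨La, ha⟩ := iha h.1
    exact ha.star h.2
  | bind x a iha =>
    obtain ⟨La, ha⟩ := iha h.1
    exact ⟨_, ha.bind h.2⟩

theorem statement7 (α : RGX Sig) (h : α.Sequential) :
    ∃ β : RGX Sig, DisjFunctional β ∧ ∀ d : List Sig, rgxSem β d = rgxSem α d := by
  obtain ⟨L, hL⟩ := h.exists_functionalDecomposition
  refine ⟨disjList (neverMatch :: L), ?_, fun d => Set.ext fun μ => ?_⟩
  · refine disjFunctional_disjList (List.cons_ne_nil _ _) fun γ hγ => ?_
    rcases List.mem_cons.mp hγ with rfl | hγ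
    exacts [neverMatch_functional, hL.functional γ hγ]
  · simp only [rgxSem, Set.mem_ofPred_eq, rmatch_disjList, List.exists_mem_cons_iff,
      not_rmatch_neverMatch, false_or, hL.rmatch_iff]

end Spanners
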